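/- Under the standing integrability assumptions, if f(·,s) is differentiable at x for μ-almost every s and F(x) = ∫ f(x,s) μ(ds) is differentiable at x, then grad F(x) = ∫ grad f(x,s) 𝟙_{Δ_f}(x,s) μ(ds), i.e. the Riemannian gradient of the expectation equals the expectation of the Riemannian gradient. -/

import Mathlib

open MeasureTheory Topology

theorem hasGradientAt_integral_of_dominated_loc_of_lip
    {E : Type*} [NormedAddCommGroup E] [InnerProductSpace ℝ E] [CompleteSpace E]
    {Ω : Type*} [MeasurableSpace Ω] {μ : Measure Ω}
    {F : E → Ω → ℝ} {g : Ω → E} {bound : Ω → ℝ} {s : Set E} {x₀ : E}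
    (hs : s ∈ 𝓝 x₀) (hF_meas : ∀ x ∈ s, AEStronglyMeasurable (F x) μ)
    (hF_int : Integrable (F x₀) μ) (hg_meas : AEStronglyMeasurable g μ)
    (h_lipsch : ∀ᵐ a ∂μ, ∀ x ∈ s, ‖F x a - F x₀ a‖ ≤ bound a * ‖x - x₀‖)
    (bound_integrable : Integrable bound μ)
    (h_diff : ∀ᵐ a ∂μ, HasGradientAt (F · a) (g a) x₀) :
    HasGradientAt (fun x ↦ ∫ a, F x a ∂μ) (∫ a, g a ∂μ) x₀ := by
  let T : E →L[ℝ] StrongDual ℝ E :=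
    (InnerProductSpace.toDual ℝ E).toLinearIsometry.toContinuousLinearMap
  have hderiv := (hasFDerivAt_integral_of_dominated_loc_of_lip' hs hF_meas hF_int
    (T.continuous.comp_aestronglyMeasurable hg_meas) h_lipsch bound_integrable
    (h_diff.mono fun _ ↦ HasGradientAt.hasFDerivAt)).2
  -- `T` is an isometry, so it commutes with the integral even without integrability of `g`.
  rwa [T.integral_comp_comm' (InnerProductSpace.toDual ℝ E).antilipschitz] at hderiv

theorem stmt14_general {E : Type*} [NormedAddCommGroup E] [InnerProductSpace ℝ E]
    [CompleteSpace E]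
    {Ω : Type*} [MeasurableSpace Ω] (μ : Measure Ω)
    (f : E → Ω → ℝ) (κ : Ω → ℝ) (g : Ω → E) (G : E) (x : E)
    (hfint : ∀ y, Integrable (f y) μ)
    (hκint : Integrable κ μ)
    (hlip : ∃ ε > (0:ℝ), ∀ y ∈ Metric.ball x ε, ∀ z ∈ Metric.ball x ε,
      ∀ s, |f y s - f z s| ≤ κ s * dist y z)
    (hgmeas : Integrable g μ)
    (hgrad : ∀ᵐ s ∂μ, HasGradientAt (fun y => f y s) (g s) x)
    (hF : HasGradientAt (fun y => ∫ s, f y s ∂μ) G x) :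
    G = ∫ s, g s ∂μ := by
  obtain ⟨ε, hε, hlip⟩ := hlip
  refine hF.unique (hasGradientAt_integral_of_dominated_loc_of_lip (Metric.ball_mem_nhds x hε)
    (fun y _ ↦ (hfint y).aestronglyMeasurable) (hfint x) hgmeas.aestronglyMeasurable
    (Filter.Eventually.of_forall fun s y hy ↦ ?_) hκint hgrad)
  simpa only [Real.norm_eq_abs, dist_eq_norm] using hlip y hy x (Metric.mem_ball_self hε) s

/-- Exchange of gradient and expectation: if `f(·,s)` is differentiable at `x` for
`μ`-a.e. `s` with gradient `g s`, the difference quotients are dominated by an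
integrable Lipschitz modulus `κ`, and `F = ∫ f(·,s) μ(ds)` is differentiable at `x`
with gradient `G`, then `G = ∫ g dμ`. -/
theorem stmt14 {E : Type*} [NormedAddCommGroup E] [InnerProductSpace ℝ E]
    [CompleteSpace E]
    {Ω : Type*} [MeasurableSpace Ω] (μ : Measure Ω) [IsProbabilityMeasure μ]
    (f : E → Ω → ℝ) (κ : Ω → ℝ) (g : Ω → E) (G : E) (x : E)
    (hfint : ∀ y, Integrable (f y) μ)
    (hκint : Integrable κ μ)
    (hκpos : ∀ s, 0 ≤ κ s)
    (hlip : ∃ ε > (0:ℝ), ∀ y ∈ Metric.ball x ε, ∀ z ∈ Metric.ball x ε,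
      ∀ s, |f y s - f z s| ≤ κ s * dist y z)
    (hgmeas : Integrable g μ)
    (hgrad : ∀ᵐ s ∂μ, HasGradientAt (fun y => f y s) (g s) x)
    (hF : HasGradientAt (fun y => ∫ s, f y s ∂μ) G x) :
    G = ∫ s, g s ∂μ :=
  stmt14_general μ f κ g G x hfint hκint hlip hgmeas hgrad hF
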